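/- Let p be a prime, r ≥ 1 an integer, and let g(x) ∈ ℚ[x] be a polynomial of degree e ≥ 1 with g(0) ≠ 0 whose Newton polygon NP_p(g) has successive vertices (x_0, y_0), (x_1, y_1), …, (x_t, y_t) (so NP_p(g) consists of t segments with strictly increasing slopes λ_s = (y_s − y_{s−1})/(x_s − x_{s−1})). Suppose f(x) ∈ ℚ[x] is a p^r-pure polynomial of degree d and that |λ_s| < r for all 1 ≤ s ≤ t. Then the Newton polygon NP_p(g ∘ f) has successive vertices (d·x_0, y_0), (d·x_1, y_1), …, (d·x_t, y_t); in particular it has t segments with slopes λ_1/d < ⋯ < λ_t/d. -/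

import Mathlib

/-! Write `g ∘ f = ∑ⱼ gⱼ fʲ`. Purity puts the Newton diagram of `f` (in index coordinates
`(i, ν_p(fᵢ))`) above the line through `(0, r)` and `(d, 0)`, hence that of `fʲ` above the line
through `(0, j r)` and `(j d, 0)`. If the diagram of `g` lies above a line of slope `-λ` with
`λ ≤ r`, each term `gⱼ fʲ`, and so `g ∘ f`, lies above that line compressed horizontally by `d`.
By convexity the whole diagram of `g` lies above the line of every segment of `NP_p(g)`, which
gives the lower bounds. At the vertex `j₀ = e - x_s` the coefficient of `x^(j₀ d)` contains
`g_{j₀} lc(f)^{j₀}`, of valuation `y_s`; the terms with `j < j₀` vanish for degree reasons and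
those with `j > j₀` have strictly larger valuation because `λ_s < r`. -/

open Polynomial

/-- The `n`-th compositional iterate of `f`: `f^0 = X`, `f^{n+1} = f ∘ f^n`. -/
noncomputable def polyIter (f : Polynomial ℚ) : ℕ → Polynomial ℚ
  | 0 => Polynomial.X
  | n + 1 => f.comp (polyIter f n)

/-- The `p`-adic valuation of a rational number, viewed as a rational number. -/
def nuQ (p : ℕ) (x : ℚ) : ℚ := (padicValRat p x : ℚ)

/-- `NP_p(h)` has successive vertices `(xs 0, ys 0), …, (xs t, ys t)`:
the corresponding coefficients are nonzero and have the prescribed valuations,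
the slopes are strictly increasing, and every point of the Newton diagram lies
on or above the polygon. -/
def HasNPVertices (p : ℕ) (h : Polynomial ℚ) (t : ℕ) (xs : ℕ → ℕ) (ys : ℕ → ℚ) : Prop :=
  h.coeff 0 ≠ 0 ∧
  xs 0 = 0 ∧ xs t = h.natDegree ∧
  (∀ s, s < t → xs s < xs (s + 1)) ∧
  (∀ s, s ≤ t → h.coeff (h.natDegree - xs s) ≠ 0 ∧
      nuQ p (h.coeff (h.natDegree - xs s)) = ys s) ∧
  (∀ s, 1 ≤ s → s < t →
      (ys s - ys (s - 1)) / ((xs s : ℚ) - (xs (s - 1) : ℚ)) <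
        (ys (s + 1) - ys s) / ((xs (s + 1) : ℚ) - (xs s : ℚ))) ∧
  (∀ s, 1 ≤ s → s ≤ t → ∀ i, h.coeff i ≠ 0 →
      xs (s - 1) ≤ h.natDegree - i → h.natDegree - i ≤ xs s →
      ys (s - 1) + ((ys s - ys (s - 1)) / ((xs s : ℚ) - (xs (s - 1) : ℚ))) *
          (((h.natDegree - i : ℕ) : ℚ) - (xs (s - 1) : ℚ)) ≤ nuQ p (h.coeff i))

/-- The number of irreducible factors of a polynomial over `ℚ`,
counted with multiplicity. -/
noncomputable def numFactors (P : Polynomial ℚ) : ℕ :=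
  (UniqueFactorizationMonoid.factors P).card

/-- `f` is `p^r`-pure. -/
def IsPpure (p r : ℕ) (f : Polynomial ℚ) : Prop :=
  f.coeff 0 ≠ 0 ∧
  padicValRat p f.leadingCoeff = 0 ∧
  padicValRat p (f.coeff 0) = (r : ℤ) ∧
  ∀ i, 0 < i → i < f.natDegree → f.coeff i ≠ 0 →
    (r : ℚ) / (f.natDegree : ℚ) ≤ nuQ p (f.coeff i) / ((f.natDegree : ℚ) - (i : ℚ))

open Finset

section Valuation

variable {p : ℕ} [Fact p.Prime]

lemma nuQ_mul {x y : ℚ} (hx : x ≠ 0) (hy : y ≠ 0) : nuQ p (x * y) = nuQ p x + nuQ p y := by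
  simp only [nuQ, padicValRat.mul hx hy, Int.cast_add]

lemma nuQ_pow (x : ℚ) (n : ℕ) : nuQ p (x ^ n) = n * nuQ p x := by
  simp only [nuQ, padicValRat.pow, Int.cast_mul, Int.cast_natCast]

lemma min_le_nuQ_add {x y : ℚ} (hxy : x + y ≠ 0) : min (nuQ p x) (nuQ p y) ≤ nuQ p (x + y) := by
  simp only [nuQ]
  exact_mod_cast padicValRat.min_le_padicValRat_add hxy

lemma le_nuQ_sum {ι : Type*} {s : Finset ι} {F : ι → ℚ} {c : ℚ}
    (h : ∀ i ∈ s, F i ≠ 0 → c ≤ nuQ p (F i)) (hs : ∑ i ∈ s, F i ≠ 0) :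
    c ≤ nuQ p (∑ i ∈ s, F i) := by
  classical
  induction s using Finset.induction_on with
  | empty => simp at hs
  | insert a s ha ih =>
    have hrest : ∀ i ∈ s, F i ≠ 0 → c ≤ nuQ p (F i) := fun i hi => h i (mem_insert_of_mem hi)
    rw [sum_insert ha] at hs ⊢
    by_cases hFa : F a = 0
    · rw [hFa, zero_add] at hs ⊢
      exact ih hrest hs
    by_cases hs0 : ∑ i ∈ s, F i = 0
    · rw [hs0, add_zero]
      exact h a (mem_insert_self a s) hFa
    exact (le_min (h a (mem_insert_self a s) hFa) (ih hrest hs0)).trans (min_le_nuQ_add hs)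

lemma nuQ_sum_eq_of_lt {ι : Type*} [DecidableEq ι] {s : Finset ι} {F : ι → ℚ} {a : ι}
    (ha : a ∈ s) (hFa : F a ≠ 0) (h : ∀ i ∈ s, i ≠ a → F i ≠ 0 → nuQ p (F a) < nuQ p (F i)) :
    ∑ i ∈ s, F i ≠ 0 ∧ nuQ p (∑ i ∈ s, F i) = nuQ p (F a) := by
  rw [← add_sum_erase s F ha]
  set R := ∑ i ∈ s.erase a, F i
  by_cases hR : R = 0
  · simp [hR, hFa]
  -- valuations are integers, so a strict lower bound is a bound by `nuQ p (F a) + 1`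
  have hlt : padicValRat p (F a) < padicValRat p R := by
    have : nuQ p (F a) + 1 ≤ nuQ p R := le_nuQ_sum (fun i hi hFi => by
      have := h i (mem_of_mem_erase hi) (ne_of_mem_erase hi) hFi
      simp only [nuQ] at this ⊢
      exact_mod_cast this) hR
    simp only [nuQ] at this
    exact_mod_cast this
  have hsum : F a + R ≠ 0 := fun h0 => by
    rw [eq_neg_of_add_eq_zero_right h0, padicValRat.neg] at hlt
    exact lt_irrefl _ hlt
  exact ⟨hsum, by simp only [nuQ, padicValRat.add_eq_of_lt hsum hFa hR hlt]⟩

end Valuation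

/-- The points `(i, ν_p(Pᵢ))`, abscissa the index `i` rather than `deg P - i` as in `NP_p`,
lie on or above the line `y = a + b i`. -/
def CoeffsAboveLine (p : ℕ) (P : Polynomial ℚ) (a b : ℚ) : Prop :=
  ∀ i, P.coeff i ≠ 0 → a + b * i ≤ nuQ p (P.coeff i)

namespace CoeffsAboveLine

variable {p : ℕ} {P Q : Polynomial ℚ} {a a' b : ℚ}

lemma one : CoeffsAboveLine p 1 0 b := by
  intro i hi
  obtain rfl : i = 0 := by by_contra h; exact hi (by simp [coeff_one, h])
  simp [nuQ]

variable [Fact p.Prime]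

lemma mul (hP : CoeffsAboveLine p P a b) (hQ : CoeffsAboveLine p Q a' b) :
    CoeffsAboveLine p (P * Q) (a + a') b := by
  intro i hi
  rw [coeff_mul] at hi ⊢
  refine le_nuQ_sum (fun ij hij hne => ?_) hi
  have hPi : P.coeff ij.1 ≠ 0 := left_ne_zero_of_mul hne
  have hQj : Q.coeff ij.2 ≠ 0 := right_ne_zero_of_mul hne
  have hsum : (ij.1 : ℚ) + ij.2 = i := by exact_mod_cast mem_antidiagonal.mp hij
  calc a + a' + b * i = (a + b * ij.1) + (a' + b * ij.2) := by rw [← hsum]; ring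
    _ ≤ nuQ p (P.coeff ij.1 * Q.coeff ij.2) := by
      rw [nuQ_mul hPi hQj]; exact add_le_add (hP _ hPi) (hQ _ hQj)

lemma pow (hP : CoeffsAboveLine p P a b) (n : ℕ) : CoeffsAboveLine p (P ^ n) (n * a) b := by
  induction n with
  | zero => simpa using one
  | succ n ih => simpa [pow_succ, add_mul, add_comm] using ih.mul hP

end CoeffsAboveLine

lemma IsPpure.natDegree_pos {p r : ℕ} {f : Polynomial ℚ} (hf : IsPpure p r f) (hr : r ≠ 0) :
    0 < f.natDegree := by
  refine Nat.pos_of_ne_zero fun hd => hr ?_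
  have hlc := hf.2.1
  rw [leadingCoeff, hd, hf.2.2.1] at hlc
  exact_mod_cast hlc

lemma IsPpure.coeffsAboveLine {p r : ℕ} {f : Polynomial ℚ} (hf : IsPpure p r f) :
    CoeffsAboveLine p f r (-r / f.natDegree) := by
  obtain ⟨-, hlc, h0, hmid⟩ := hf
  intro i hi
  rcases Nat.eq_zero_or_pos i with rfl | hi0
  · simp [nuQ, h0]
  have hd : (0 : ℚ) < f.natDegree := by exact_mod_cast hi0.trans_le (le_natDegree_of_ne_zero hi)
  rcases (le_natDegree_of_ne_zero hi).lt_or_eq with hlt | rfl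
  · have hdi : (0 : ℚ) < f.natDegree - i := sub_pos.mpr (by exact_mod_cast hlt)
    have hbound := hmid i hi0 hlt hi
    rw [div_le_div_iff₀ hd hdi] at hbound
    calc (r : ℚ) + -r / f.natDegree * i = r * (f.natDegree - i) / f.natDegree := by
          field_simp; ring
      _ ≤ nuQ p (f.coeff i) := by rw [div_le_iff₀ hd]; linarith
  · rw [← leadingCoeff, nuQ, hlc]
    simp [hd.ne']

lemma coeff_comp_eq_sum {R : Type*} [Semiring R] (g f : Polynomial R) (i : ℕ) :
    (g.comp f).coeff i = ∑ j ∈ g.support, g.coeff j * (f ^ j).coeff i := by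
  simp only [comp, eval₂_eq_sum, Polynomial.sum, finsetSum_coeff, coeff_C_mul]

namespace CoeffsAboveLine

variable {p : ℕ} [Fact p.Prime] {g f : Polynomial ℚ} {a b c : ℚ}

lemma comp {d : ℕ} (hg : CoeffsAboveLine p g a b) (hf : CoeffsAboveLine p f c (-c / d))
    (hfd : f.natDegree ≤ d) (hbc : 0 ≤ b + c) :
    CoeffsAboveLine p (g.comp f) a (b / d) := by
  intro i hi
  rw [coeff_comp_eq_sum] at hi ⊢
  refine le_nuQ_sum (fun j _ hne => ?_) hi
  have hgj : g.coeff j ≠ 0 := left_ne_zero_of_mul hne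
  have hfj : (f ^ j).coeff i ≠ 0 := right_ne_zero_of_mul hne
  have hij : (i : ℚ) / d ≤ j := by
    refine div_le_of_le_mul₀ (Nat.cast_nonneg _) (Nat.cast_nonneg _) ?_
    have := (le_natDegree_of_ne_zero hfj).trans (natDegree_pow_le.trans (Nat.mul_le_mul_left j hfd))
    exact_mod_cast this
  calc a + b / d * i = (a + b * j) + (j * c + -c / d * i) - (b + c) * (j - i / d) := by ring
    _ ≤ nuQ p (g.coeff j) + nuQ p ((f ^ j).coeff i) := by
      linarith [hg j hgj, hf.pow j i hfj, mul_nonneg hbc (sub_nonneg.2 hij)]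
    _ = nuQ p (g.coeff j * (f ^ j).coeff i) := (nuQ_mul hgj hfj).symm

lemma nuQ_coeff_comp_mul_natDegree {j₀ : ℕ} (hg : CoeffsAboveLine p g a b)
    (hj₀ : g.coeff j₀ ≠ 0) (hv : nuQ p (g.coeff j₀) = a + b * j₀)
    (hf : CoeffsAboveLine p f c (-c / f.natDegree)) (hd : 0 < f.natDegree)
    (hlc : nuQ p f.leadingCoeff = 0) (hbc : 0 < b + c) :
    (g.comp f).coeff (j₀ * f.natDegree) ≠ 0 ∧
      nuQ p ((g.comp f).coeff (j₀ * f.natDegree)) = nuQ p (g.coeff j₀) := by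
  have hlc0 : f.leadingCoeff ^ j₀ ≠ 0 :=
    pow_ne_zero _ (leadingCoeff_ne_zero.2 (ne_zero_of_natDegree_gt hd))
  have hterm : g.coeff j₀ * (f ^ j₀).coeff (j₀ * f.natDegree) ≠ 0 := by
    rw [coeff_pow_mul_natDegree]; exact mul_ne_zero hj₀ hlc0
  have hval : nuQ p (g.coeff j₀ * (f ^ j₀).coeff (j₀ * f.natDegree)) = nuQ p (g.coeff j₀) := by
    rw [coeff_pow_mul_natDegree, nuQ_mul hj₀ hlc0, nuQ_pow, hlc, mul_zero, add_zero]
  rw [coeff_comp_eq_sum, ← hval]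
  refine nuQ_sum_eq_of_lt (mem_support_iff.2 hj₀) hterm (fun j _ hjj₀ hne => ?_)
  have hgj : g.coeff j ≠ 0 := left_ne_zero_of_mul hne
  have hfj : (f ^ j).coeff (j₀ * f.natDegree) ≠ 0 := right_ne_zero_of_mul hne
  have hlt : (j₀ : ℚ) < j := by
    have := (le_natDegree_of_ne_zero hfj).trans natDegree_pow_le
    exact_mod_cast (Nat.le_of_mul_le_mul_right this hd).lt_of_ne (Ne.symm hjj₀)
  have hd' : (f.natDegree : ℚ) ≠ 0 := by exact_mod_cast hd.ne'
  calc nuQ p (g.coeff j₀ * (f ^ j₀).coeff (j₀ * f.natDegree))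
      = a + b * j₀ := by rw [hval, hv]
    _ < a + b * j₀ + (b + c) * (j - j₀) := lt_add_of_pos_right _ (mul_pos hbc (sub_pos.2 hlt))
    _ = (a + b * j) + (j * c + -c / f.natDegree * ((j₀ * f.natDegree : ℕ) : ℚ)) := by
      push_cast; field_simp; ring
    _ ≤ nuQ p (g.coeff j) + nuQ p ((f ^ j).coeff (j₀ * f.natDegree)) :=
      add_le_add (hg j hgj) (hf.pow j _ hfj)
    _ = nuQ p (g.coeff j * (f ^ j).coeff (j₀ * f.natDegree)) := (nuQ_mul hgj hfj).symm

end CoeffsAboveLine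

lemma exists_bracketing_index {α : Type*} [LinearOrder α] {xs : ℕ → α} {t : ℕ} {u : α}
    (ht : 1 ≤ t) (h0 : xs 0 ≤ u) (hu : u ≤ xs t) :
    ∃ s, 1 ≤ s ∧ s ≤ t ∧ xs (s - 1) ≤ u ∧ u ≤ xs s := by
  classical
  have hex : ∃ m, 1 ≤ m ∧ u ≤ xs m := ⟨t, ht, hu⟩
  obtain ⟨hm1, hm⟩ := Nat.find_spec hex
  refine ⟨Nat.find hex, hm1, Nat.find_min' hex ⟨ht, hu⟩, ?_, hm⟩
  rcases hm1.eq_or_lt with h1 | h1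
  · rwa [← h1]
  · exact le_of_not_ge fun h => Nat.find_min hex (by omega) ⟨by omega, h⟩

def segmentSlope (xs : ℕ → ℕ) (ys : ℕ → ℚ) (s : ℕ) : ℚ :=
  (ys s - ys (s - 1)) / ((xs s : ℚ) - (xs (s - 1) : ℚ))

def segmentLine (xs : ℕ → ℕ) (ys : ℕ → ℚ) (s : ℕ) (u : ℚ) : ℚ :=
  ys (s - 1) + segmentSlope xs ys s * (u - xs (s - 1))

section Polyline

variable {xs : ℕ → ℕ} {ys : ℕ → ℚ} {t s : ℕ}

lemma segmentLine_eq_of_ne (h : xs (s - 1) ≠ xs s) (u : ℚ) :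
    segmentLine xs ys s u = ys s + segmentSlope xs ys s * (u - xs s) := by
  have : (xs s : ℚ) - xs (s - 1) ≠ 0 := sub_ne_zero.2 (by exact_mod_cast h.symm)
  unfold segmentLine segmentSlope
  field_simp
  ring

lemma segmentSlope_mul (d : ℕ) :
    segmentSlope (fun s => d * xs s) ys s = segmentSlope xs ys s / d := by
  unfold segmentSlope
  push_cast
  rw [← mul_sub, div_mul_eq_div_div_swap]

lemma segmentLine_mul {d : ℕ} (hd : d ≠ 0) (u : ℚ) :
    segmentLine (fun s => d * xs s) ys s (u * d) = segmentLine xs ys s u := by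
  unfold segmentLine
  rw [segmentSlope_mul]
  push_cast
  field_simp

lemma segmentLine_le_of_le (hx : StrictMonoOn xs (Set.Iic t))
    (hinc : ∀ s, 1 ≤ s → s < t → segmentSlope xs ys s < segmentSlope xs ys (s + 1))
    {s' : ℕ} {u : ℚ} (hs : 1 ≤ s) (hss' : s ≤ s') (hs't : s' ≤ t)
    (hu : xs (s' - 1) ≤ u) : segmentLine xs ys s u ≤ segmentLine xs ys s' u := by
  induction s', hss' using Nat.le_induction with
  | base => exact le_rfl
  | succ n hsn ih =>
    rw [Nat.add_sub_cancel] at hu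
    have hn : xs (n - 1) < xs n :=
      hx (Set.mem_Iic.2 (by omega)) (Set.mem_Iic.2 (by omega)) (by omega)
    calc segmentLine xs ys s u ≤ segmentLine xs ys n u :=
          ih (by omega) (le_trans (by exact_mod_cast hn.le) hu)
      _ = ys n + segmentSlope xs ys n * (u - xs n) := segmentLine_eq_of_ne hn.ne u
      _ ≤ ys n + segmentSlope xs ys (n + 1) * (u - xs n) := by
          gcongr ys n + ?_
          exact mul_le_mul_of_nonneg_right (hinc n (by omega) (by omega)).le (sub_nonneg.2 hu)
      _ = segmentLine xs ys (n + 1) u := by rw [segmentLine, Nat.add_sub_cancel]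

lemma segmentLine_le_of_ge (hx : StrictMonoOn xs (Set.Iic t))
    (hinc : ∀ s, 1 ≤ s → s < t → segmentSlope xs ys s < segmentSlope xs ys (s + 1))
    {s' : ℕ} {u : ℚ} (hs' : 1 ≤ s') (hs's : s' ≤ s) (hst : s ≤ t)
    (hu : u ≤ xs s') : segmentLine xs ys s u ≤ segmentLine xs ys s' u := by
  induction s, hs's using Nat.le_induction with
  | base => exact le_rfl
  | succ n hsn ih =>
    have hn : xs (n - 1) < xs n :=
      hx (Set.mem_Iic.2 (by omega)) (Set.mem_Iic.2 (by omega)) (by omega)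
    have hun : u ≤ xs n := hu.trans <| by
      exact_mod_cast hx.monotoneOn (Set.mem_Iic.2 (by omega)) (Set.mem_Iic.2 (by omega)) hsn
    calc segmentLine xs ys (n + 1) u = ys n + segmentSlope xs ys (n + 1) * (u - xs n) := by
          rw [segmentLine, Nat.add_sub_cancel]
      _ ≤ ys n + segmentSlope xs ys n * (u - xs n) := by
          gcongr ys n + ?_
          exact mul_le_mul_of_nonpos_right (hinc n (by omega) (by omega)).le (sub_nonpos.2 hun)
      _ = segmentLine xs ys n u := (segmentLine_eq_of_ne hn.ne u).symm
      _ ≤ segmentLine xs ys s' u := ih (by omega)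

end Polyline

namespace HasNPVertices

variable {p : ℕ} {g : Polynomial ℚ} {t s : ℕ} {xs : ℕ → ℕ} {ys : ℕ → ℚ}

lemma strictMonoOn (h : HasNPVertices p g t xs ys) : StrictMonoOn xs (Set.Iic t) :=
  strictMonoOn_Iic_of_lt_succ h.2.2.2.1

/-- Convexity turns the condition of `HasNPVertices`, which compares each point only with the
segment above which it lies, into a bound by the line of every segment. -/
lemma coeffsAboveLine (h : HasNPVertices p g t xs ys) (hs : 1 ≤ s) (hst : s ≤ t) :
    CoeffsAboveLine p g (segmentLine xs ys s g.natDegree) (-segmentSlope xs ys s) := by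
  have hx := h.strictMonoOn
  obtain ⟨-, hx0, hxt, -, -, hinc, hbelow⟩ := h
  intro j hj
  have hje : j ≤ g.natDegree := le_natDegree_of_ne_zero hj
  obtain ⟨s', hs', hs't, hlo, hhi⟩ :=
    exists_bracketing_index (xs := xs) (u := g.natDegree - j) (by omega : 1 ≤ t)
      (by rw [hx0]; exact Nat.zero_le _) (by rw [hxt]; exact Nat.sub_le _ j)
  have hcast : ((g.natDegree - j : ℕ) : ℚ) = g.natDegree - j := Nat.cast_sub hje
  calc segmentLine xs ys s g.natDegree + -segmentSlope xs ys s * j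
      = segmentLine xs ys s ((g.natDegree - j : ℕ) : ℚ) := by
        rw [hcast, segmentLine, segmentLine]; ring
    _ ≤ segmentLine xs ys s' ((g.natDegree - j : ℕ) : ℚ) := by
      rcases le_total s s' with hss' | hs's
      · exact segmentLine_le_of_le hx hinc hs hss' hs't (by exact_mod_cast hlo)
      · exact segmentLine_le_of_ge hx hinc hs' hs's hst (by exact_mod_cast hhi)
    _ ≤ nuQ p (g.coeff j) := hbelow s' hs' hs't j hj hlo hhi

lemma coeff_comp_vertex [Fact p.Prime] {r : ℕ} {f : Polynomial ℚ}
    (h : HasNPVertices p g t xs ys) (hf : IsPpure p r f) (hd : 0 < f.natDegree)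
    (hslope : ∀ s, 1 ≤ s → s ≤ t → segmentSlope xs ys s < r) (hst : s ≤ t) :
    (g.comp f).coeff ((g.natDegree - xs s) * f.natDegree) ≠ 0 ∧
      nuQ p ((g.comp f).coeff ((g.natDegree - xs s) * f.natDegree)) = ys s := by
  have hx := h.strictMonoOn
  have hline (hs : 1 ≤ s) := h.coeffsAboveLine hs hst
  obtain ⟨-, hx0, hxt, -, hvert, -, -⟩ := h
  obtain ⟨hne, hval⟩ := hvert s hst
  have hlc : nuQ p f.leadingCoeff = 0 := by simp [nuQ, hf.2.1]
  rcases Nat.eq_zero_or_pos s with rfl | hs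
  · rw [hx0, Nat.sub_zero] at hne hval ⊢
    have hflc : f.leadingCoeff ^ g.natDegree ≠ 0 :=
      pow_ne_zero _ (leadingCoeff_ne_zero.2 (ne_zero_of_natDegree_gt hd))
    rw [coeff_comp_degree_mul_degree hd.ne', nuQ_mul (x := g.leadingCoeff) hne hflc, nuQ_pow, hlc,
      mul_zero, add_zero]
    exact ⟨mul_ne_zero hne hflc, hval⟩
  · rw [← hval]
    refine (hline hs).nuQ_coeff_comp_mul_natDegree hne ?_ hf.coeffsAboveLine hd hlc
      (by linarith [hslope s hs hst])
    have hxs : xs s ≤ g.natDegree := hxt ▸ hx.monotoneOn hst Set.self_mem_Iic hst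
    have hpred : xs (s - 1) < xs s := hx (Set.mem_Iic.2 (by omega)) hst (by omega)
    rw [hval, Nat.cast_sub hxs, segmentLine_eq_of_ne hpred.ne]
    ring

end HasNPVertices

lemma hasNPVertices_of_coeffsAboveLine {p t : ℕ} {h : Polynomial ℚ} {xs : ℕ → ℕ} {ys : ℕ → ℚ}
    (h0 : h.coeff 0 ≠ 0) (hx0 : xs 0 = 0) (hxt : xs t = h.natDegree)
    (hx : ∀ s < t, xs s < xs (s + 1))
    (hvert : ∀ s ≤ t,
      h.coeff (h.natDegree - xs s) ≠ 0 ∧ nuQ p (h.coeff (h.natDegree - xs s)) = ys s)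
    (hinc : ∀ s, 1 ≤ s → s < t → segmentSlope xs ys s < segmentSlope xs ys (s + 1))
    (hline : ∀ s, 1 ≤ s → s ≤ t →
      CoeffsAboveLine p h (segmentLine xs ys s h.natDegree) (-segmentSlope xs ys s)) :
    HasNPVertices p h t xs ys := by
  refine ⟨h0, hx0, hxt, hx, hvert, hinc, fun s hs hst i hi _ _ => ?_⟩
  calc segmentLine xs ys s ((h.natDegree - i : ℕ) : ℚ)
      = segmentLine xs ys s h.natDegree + -segmentSlope xs ys s * i := by
        rw [Nat.cast_sub (le_natDegree_of_ne_zero hi), segmentLine, segmentLine]; ring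
    _ ≤ nuQ p (h.coeff i) := hline s hs hst i hi

theorem newton_polygon_comp_pure_general
    (p r : ℕ) (hp : p.Prime) (hr : 1 ≤ r)
    (g f : Polynomial ℚ) (d t : ℕ)
    (xs : ℕ → ℕ) (ys : ℕ → ℚ)
    (hNPg : HasNPVertices p g t xs ys)
    (hfd : f.natDegree = d)
    (hpure : IsPpure p r f)
    (hslope : ∀ s, 1 ≤ s → s ≤ t →
      |(ys s - ys (s - 1)) / ((xs s : ℚ) - (xs (s - 1) : ℚ))| < (r : ℚ)) :
    HasNPVertices p (g.comp f) t (fun s => d * xs s) ys := by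
  have : Fact p.Prime := ⟨hp⟩
  subst hfd
  have hd : 0 < f.natDegree := hpure.natDegree_pos (by omega)
  have hslope' : ∀ s, 1 ≤ s → s ≤ t → segmentSlope xs ys s < r :=
    fun s hs hst => (le_abs_self _).trans_lt (hslope s hs hst)
  have hvert (s : ℕ) (hst : s ≤ t) := hNPg.coeff_comp_vertex hpure hd hslope' hst
  have hline (s : ℕ) (hs : 1 ≤ s) (hst : s ≤ t) := hNPg.coeffsAboveLine hs hst
  have hD : (g.comp f).natDegree = g.natDegree * f.natDegree := natDegree_comp
  obtain ⟨-, hx0, hxt, hx, -, hinc, -⟩ := hNPg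
  refine hasNPVertices_of_coeffsAboveLine ?_ (by simp [hx0]) (by simp [hxt, hD, mul_comm])
    (fun s hs => Nat.mul_lt_mul_of_pos_left (hx s hs) hd) (fun s hst => ?_) (fun s hs hst => ?_)
    (fun s hs hst => ?_)
  · simpa [hxt] using (hvert t le_rfl).1
  · rw [hD, mul_comm f.natDegree, ← Nat.sub_mul]
    exact hvert s hst
  · rw [segmentSlope_mul, segmentSlope_mul]
    exact div_lt_div_of_pos_right (hinc s hs hst) (by exact_mod_cast hd)
  · rw [segmentSlope_mul, hD, Nat.cast_mul, segmentLine_mul hd.ne', ← neg_div]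
    exact (hline s hs hst).comp hpure.coeffsAboveLine le_rfl
      (by linarith [hslope' s hs hst])

/-- Corollary 1.8 (Gajek-Leonard–Tomer): composing with a `p^r`-pure polynomial
stretches the Newton polygon horizontally by the degree, provided all slopes
have absolute value less than `r`. -/
theorem newton_polygon_comp_pure
    (p r : ℕ) (hp : p.Prime) (hr : 1 ≤ r)
    (g f : Polynomial ℚ) (e d t : ℕ)
    (hge : g.natDegree = e) (he1 : 1 ≤ e)
    (hg0 : g.coeff 0 ≠ 0)
    (xs : ℕ → ℕ) (ys : ℕ → ℚ)
    (hNPg : HasNPVertices p g t xs ys)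
    (hfd : f.natDegree = d)
    (hpure : IsPpure p r f)
    (hslope : ∀ s, 1 ≤ s → s ≤ t →
      |(ys s - ys (s - 1)) / ((xs s : ℚ) - (xs (s - 1) : ℚ))| < (r : ℚ)) :
    HasNPVertices p (g.comp f) t (fun s => d * xs s) ys :=
  newton_polygon_comp_pure_general p r hp hr g f d t xs ys hNPg hfd hpure hslope
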